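/- arXiv:2305.18388 — 3 statements merged into one kernel-verified Lean document; each statement's English description precedes it below -/
import Mathlib

section
/- For a random variable Z with CDF F and finite mean, the positive part of the mean equals the integral of the quantile function over the upper tail: E[Z · 1{Z > 0}] = ∫_{F(0)}^{1} F⁻¹(τ) dτ. -/
/-!
If `U` is uniform on `(0, 1)`, then `F⁻¹(U)` has law `μ`: for `τ ∈ (0, 1)`, right continuity of
`F` gives `F⁻¹(τ) ≤ t ↔ τ ≤ F(t)`, so `P(F⁻¹(U) ≤ t) = F(t)`. Changing variables along `F⁻¹`
turns `∫_{z > 0} z dμ` into the integral of `F⁻¹` over `{τ ∈ (0, 1) : F⁻¹(τ) > 0}`, which by the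
same equivalence is `(F(0), 1)`.
-/

open MeasureTheory

/-- Generalized inverse CDF: `F⁻¹(τ) = inf {z : F(z) ≥ τ}`. -/
noncomputable def quantile (μ : Measure ℝ) (τ : ℝ) : ℝ :=
  sInf {z : ℝ | τ ≤ ProbabilityTheory.cdf μ z}

open ProbabilityTheory Set

section Quantile

variable (μ : Measure ℝ) {τ : ℝ}

lemma nonempty_setOf_le_cdf (h1 : τ < 1) : {z | τ ≤ cdf μ z}.Nonempty :=
  (((tendsto_cdf_atTop μ).eventually (lt_mem_nhds h1)).exists).imp fun _ hz => hz.le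

lemma bddBelow_setOf_le_cdf (h0 : 0 < τ) : BddBelow {z | τ ≤ cdf μ z} := by
  obtain ⟨z₀, hz₀⟩ := ((tendsto_cdf_atBot μ).eventually (gt_mem_nhds h0)).exists
  exact ⟨z₀, fun z hz => le_of_not_gt fun hlt => (hz.trans (monotone_cdf μ hlt.le)).not_gt hz₀⟩

lemma quantile_le_iff (h0 : 0 < τ) (h1 : τ < 1) {t : ℝ} :
    quantile μ τ ≤ t ↔ τ ≤ cdf μ t := by
  have hne := nonempty_setOf_le_cdf μ h1
  have hbdd := bddBelow_setOf_le_cdf μ h0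
  refine ⟨fun hle => ?_, fun h => csInf_le hbdd h⟩
  -- right continuity of the CDF: the infimum is attained
  have hattained : τ ≤ cdf μ (quantile μ τ) := by
    refine ge_of_tendsto (((cdf μ).right_continuous _).mono Ioi_subset_Ici_self) ?_
    filter_upwards [self_mem_nhdsWithin] with x hx
    obtain ⟨z, hz, hzx⟩ := (csInf_lt_iff hbdd hne).1 hx
    exact hz.trans (monotone_cdf μ hzx.le)
  exact hattained.trans (monotone_cdf μ hle)

lemma lt_quantile_iff (h0 : 0 < τ) (h1 : τ < 1) {t : ℝ} :
    t < quantile μ τ ↔ cdf μ t < τ := by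
  simpa only [not_le] using (quantile_le_iff μ h0 h1).not

lemma monotoneOn_quantile : MonotoneOn (quantile μ) (Ioo 0 1) := fun _ ha _ hb hab =>
  csInf_le_csInf (bddBelow_setOf_le_cdf μ ha.1) (nonempty_setOf_le_cdf μ hb.2)
    fun _ hz => hab.trans hz

lemma preimage_quantile_Iic_inter_Ioo (t : ℝ) :
    quantile μ ⁻¹' Iic t ∩ Ioo 0 1 = Ioc 0 (cdf μ t) ∩ Iio 1 := by
  ext τ
  constructor
  · rintro ⟨hq, h0, h1⟩
    exact ⟨⟨h0, (quantile_le_iff μ h0 h1).1 hq⟩, h1⟩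
  · rintro ⟨⟨h0, hτ⟩, h1⟩
    exact ⟨(quantile_le_iff μ h0 h1).2 hτ, h0, h1⟩

lemma preimage_quantile_Ioi_inter_Ioo (t : ℝ) :
    quantile μ ⁻¹' Ioi t ∩ Ioo 0 1 = Ioo (cdf μ t) 1 := by
  ext τ
  constructor
  · rintro ⟨hq, h0, h1⟩
    exact ⟨(lt_quantile_iff μ h0 h1).1 hq, h1⟩
  · rintro ⟨hτ, h1⟩
    have h0 : 0 < τ := (cdf_nonneg μ t).trans_lt hτ
    exact ⟨(lt_quantile_iff μ h0 h1).2 hτ, h0, h1⟩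

lemma aemeasurable_quantile : AEMeasurable (quantile μ) (volume.restrict (Ioo 0 1)) :=
  aemeasurable_restrict_of_monotoneOn measurableSet_Ioo (monotoneOn_quantile μ)

theorem map_quantile_volume_Ioo [IsProbabilityMeasure μ] :
    (volume.restrict (Ioo 0 1)).map (quantile μ) = μ := by
  refine (Measure.ext_of_Iic μ _ fun t => ?_).symm
  have hIio : (Ioc 0 (cdf μ t) ∩ Iio 1 : Set ℝ) =ᵐ[volume] (Ioc 0 (cdf μ t) ∩ Iic 1 : Set ℝ) :=
    ae_eq_set_inter (ae_eq_refl _) Iio_ae_eq_Iic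
  rw [Measure.map_apply_of_aemeasurable (aemeasurable_quantile μ) measurableSet_Iic,
    Measure.restrict_apply' measurableSet_Ioo, preimage_quantile_Iic_inter_Ioo, measure_congr hIio,
    Ioc_inter_Iic, min_eq_left (cdf_le_one μ t), Real.volume_Ioc, sub_zero, ofReal_cdf]

end Quantile

theorem positive_part_mean_eq_quantile_integral_general (μ : Measure ℝ) [IsProbabilityMeasure μ] :
    ∫ z in Set.Ioi (0 : ℝ), z ∂μ
      = ∫ τ in Set.Ioo (ProbabilityTheory.cdf μ 0) 1, quantile μ τ := by
  conv_lhs => rw [← map_quantile_volume_Ioo μ]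
  rw [setIntegral_map (f := fun z => z) measurableSet_Ioi aestronglyMeasurable_id
      (aemeasurable_quantile μ),
    Measure.restrict_restrict' measurableSet_Ioo, preimage_quantile_Ioi_inter_Ioo]

/-- For a distribution `μ` with CDF `F` and finite mean, the positive part of the mean equals
the integral of the quantile function over the upper tail:
`E[Z 1{Z > 0}] = ∫_{F(0)}^1 F⁻¹(τ) dτ`. -/
theorem positive_part_mean_eq_quantile_integral (μ : Measure ℝ) [IsProbabilityMeasure μ]
    (hint : Integrable (fun z : ℝ => z) μ) :
    ∫ z in Set.Ioi (0 : ℝ), z ∂μ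
      = ∫ τ in Set.Ioo (ProbabilityTheory.cdf μ 0) 1, quantile μ τ :=
  positive_part_mean_eq_quantile_integral_general μ
end

section
/- Let μ be a probability measure on ℝ supported on [a,b] with quantile function F⁻¹, and let ν = (1/m) Σ_{i=1}^m δ_{F⁻¹((2i−1)/(2m))} be the discrete distribution placing mass 1/m at each of the quantiles at levels (2i−1)/(2m). Then W₁(μ, ν) ≤ (b − a)/(2m). -/
/-!
Let `Q` be the quantile function of `μ`, extended monotonically to all of `ℝ`. Under Lebesgue
measure on `(0, 1]`, `Q` has law `μ`, while `Q` evaluated at the midpoint of the cell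
`(i/m, (i+1)/m]` containing `τ` has law `ν`; coupling the two through the same `τ` bounds
`W₁(μ, ν)` by `∫₀¹ |Q τ - Q(mid τ)| dτ`. On each cell, monotonicity of `Q` bounds the integrand
by the increment of `Q` over the half-cell containing `τ`, so the cell contributes at most
`1/(2m)` times the increment of `Q` over the cell; these increments telescope to
`Q 1 - Q 0 ≤ b - a`.
-/

open MeasureTheory

/-- Wasserstein-1 distance on ℝ, defined as the infimum over couplings of the expected
absolute difference. -/
noncomputable def W1 (μ ν : Measure ℝ) : ℝ :=
  sInf {c : ℝ | ∃ γ : Measure (ℝ × ℝ), IsProbabilityMeasure γ ∧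
    γ.map Prod.fst = μ ∧ γ.map Prod.snd = ν ∧ c = ∫ p : ℝ × ℝ, |p.1 - p.2| ∂γ}

open ProbabilityTheory Set Topology
open scoped ENNReal

lemma W1_map_le_integral {α : Type*} [MeasurableSpace α] (ρ : Measure α) [IsProbabilityMeasure ρ]
    {f g : α → ℝ} (hf : Measurable f) (hg : Measurable g) :
    W1 (ρ.map f) (ρ.map g) ≤ ∫ x, |f x - g x| ∂ρ := by
  have hfg : Measurable fun x => (f x, g x) := hf.prodMk hg
  refine csInf_le ⟨0, ?_⟩ ⟨ρ.map fun x => (f x, g x), Measure.isProbabilityMeasure_map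
    hfg.aemeasurable, by rw [Measure.map_map measurable_fst hfg]; rfl,
    by rw [Measure.map_map measurable_snd hfg]; rfl, ?_⟩
  · rintro _ ⟨γ, -, -, -, rfl⟩
    exact integral_nonneg fun _ => abs_nonneg _
  · rw [integral_map hfg.aemeasurable (by fun_prop)]

section Quantile

variable {μ : Measure ℝ} {τ x : ℝ}

lemma le_cdf_quantile (hne : {z | τ ≤ cdf μ z}.Nonempty) : τ ≤ cdf μ (quantile μ τ) := by
  have hev : ∀ᶠ z in 𝓝[>] (quantile μ τ), τ ≤ cdf μ z := by
    refine eventually_nhdsWithin_of_forall fun z hz => ?_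
    obtain ⟨s, hs, hsz⟩ := exists_lt_of_csInf_lt hne hz
    exact hs.trans (monotone_cdf μ hsz.le)
  exact ge_of_tendsto (((cdf μ).right_continuous _).mono Ioi_subset_Ici_self) hev

lemma quantile_le_iff_s5 (hne : {z | τ ≤ cdf μ z}.Nonempty) (hbdd : BddBelow {z | τ ≤ cdf μ z}) :
    quantile μ τ ≤ x ↔ τ ≤ cdf μ x :=
  ⟨fun h => (le_cdf_quantile hne).trans (monotone_cdf μ h), fun h => csInf_le hbdd h⟩

variable [IsProbabilityMeasure μ] {a b : ℝ}

lemma cdf_eq_zero_of_lt (hsupp : μ (Icc a b) = 1) (hx : x < a) : cdf μ x = 0 := by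
  have hcompl : μ (Icc a b)ᶜ = 0 := by
    rw [prob_compl_eq_zero_iff measurableSet_Icc, hsupp]
  have : μ (Iic x) = 0 :=
    measure_mono_null (fun z (hz : z ≤ x) (hz' : z ∈ Icc a b) => hx.not_ge (hz'.1.trans hz)) hcompl
  rw [cdf_eq_real, measureReal_def, this, ENNReal.toReal_zero]

lemma cdf_eq_one_of_le (hsupp : μ (Icc a b) = 1) (hx : b ≤ x) : cdf μ x = 1 := by
  have : μ (Iic x) = 1 :=
    le_antisymm prob_le_one (hsupp ▸ measure_mono fun z hz => hz.2.trans hx)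
  rw [cdf_eq_real, measureReal_def, this, ENNReal.toReal_one]

lemma mem_setOf_le_cdf_of_le_one (hsupp : μ (Icc a b) = 1) (h1 : τ ≤ 1) :
    b ∈ {z | τ ≤ cdf μ z} :=
  show τ ≤ cdf μ b from (cdf_eq_one_of_le hsupp le_rfl).symm ▸ h1

lemma mem_lowerBounds_setOf_le_cdf (hsupp : μ (Icc a b) = 1) (h0 : 0 < τ) :
    a ∈ lowerBounds {z | τ ≤ cdf μ z} := fun z hz => by
  by_contra! hza
  exact (cdf_eq_zero_of_lt hsupp hza ▸ hz : τ ≤ 0).not_gt h0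

lemma quantile_mem_Icc (hsupp : μ (Icc a b) = 1) (h0 : 0 < τ) (h1 : τ ≤ 1) :
    quantile μ τ ∈ Icc a b :=
  ⟨le_csInf ⟨b, mem_setOf_le_cdf_of_le_one hsupp h1⟩ (mem_lowerBounds_setOf_le_cdf hsupp h0),
    csInf_le ⟨a, mem_lowerBounds_setOf_le_cdf hsupp h0⟩ (mem_setOf_le_cdf_of_le_one hsupp h1)⟩

end Quantile

section QuantileExtend

variable {μ : Measure ℝ} {a : ℝ}

/-- `quantile μ` takes junk values outside `(0, 1]` (`sInf` of an unbounded or empty set);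
this extension is monotone on all of `ℝ`. -/
noncomputable def quantileExtend (μ : Measure ℝ) (a τ : ℝ) : ℝ :=
  if τ ≤ 0 then a else quantile μ (min τ 1)

lemma quantileExtend_zero : quantileExtend μ a 0 = a := if_pos le_rfl

lemma quantileExtend_of_mem_Ioc {τ : ℝ} (hτ : τ ∈ Ioc 0 1) :
    quantileExtend μ a τ = quantile μ τ := by
  rw [quantileExtend, if_neg hτ.1.not_ge, min_eq_left hτ.2]

variable [IsProbabilityMeasure μ] {b : ℝ}

lemma quantileExtend_one_le (hsupp : μ (Icc a b) = 1) : quantileExtend μ a 1 ≤ b := by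
  rw [quantileExtend_of_mem_Ioc ⟨one_pos, le_rfl⟩]
  exact (quantile_mem_Icc hsupp one_pos le_rfl).2

lemma monotone_quantileExtend (hsupp : μ (Icc a b) = 1) : Monotone (quantileExtend μ a) := by
  intro τ τ' hττ'
  unfold quantileExtend
  split_ifs with hτ hτ' hτ'
  · exact le_rfl
  · exact (quantile_mem_Icc hsupp (lt_min (not_le.1 hτ') one_pos) (min_le_right _ _)).1
  · exact absurd (hττ'.trans hτ') hτ
  · exact csInf_le_csInf ⟨a, mem_lowerBounds_setOf_le_cdf hsupp (lt_min (not_le.1 hτ) one_pos)⟩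
      ⟨b, mem_setOf_le_cdf_of_le_one hsupp (min_le_right _ _)⟩
      fun z hz => (min_le_min_right 1 hττ').trans hz

lemma map_quantileExtend (hsupp : μ (Icc a b) = 1) :
    (volume.restrict (Ioc (0 : ℝ) 1)).map (quantileExtend μ a) = μ := by
  have hmeas := (monotone_quantileExtend hsupp).measurable
  refine Measure.ext_of_Iic _ _ fun x => ?_
  have hpre : quantileExtend μ a ⁻¹' Iic x ∩ Ioc 0 1 = Ioc 0 (cdf μ x) := by
    ext τ
    have hiff (hτ : τ ∈ Ioc 0 1) : quantileExtend μ a τ ≤ x ↔ τ ≤ cdf μ x := by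
      rw [quantileExtend_of_mem_Ioc hτ]
      exact quantile_le_iff_s5 ⟨b, mem_setOf_le_cdf_of_le_one hsupp hτ.2⟩
        ⟨a, mem_lowerBounds_setOf_le_cdf hsupp hτ.1⟩
    exact ⟨fun ⟨hτx, hτ⟩ => ⟨hτ.1, (hiff hτ).1 hτx⟩,
      fun hτ => have hτ' : τ ∈ Ioc 0 1 := ⟨hτ.1, hτ.2.trans (cdf_le_one μ x)⟩
        ⟨(hiff hτ').2 hτ.2, hτ'⟩⟩
  rw [Measure.map_apply hmeas measurableSet_Iic, Measure.restrict_apply (hmeas measurableSet_Iic),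
    hpre, Real.volume_Ioc, sub_zero, ofReal_cdf]

end QuantileExtend

section MonotoneOn

variable {f : ℝ → ℝ} {s t : ℝ}

lemma integrableOn_abs_sub_of_monotoneOn (hf : MonotoneOn f (Icc s t)) (y : ℝ) :
    IntegrableOn (fun τ => |f τ - y|) (Ioc s t) :=
  (((hf.integrableOn_isCompact isCompact_Icc).mono_set Ioc_subset_Icc_self).sub
    (integrableOn_const measure_Ioc_lt_top.ne)).abs

lemma setIntegral_abs_sub_le_of_monotoneOn {x : ℝ} (hf : MonotoneOn f (Icc s t))
    (hsx : s ≤ x) (hxt : x ≤ t) :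
    ∫ τ in Ioc s t, |f τ - f x| ≤ (f x - f s) * (x - s) + (f t - f x) * (t - x) := by
  have hbound : ∀ {u v C : ℝ}, u ≤ v → (∀ τ ∈ Ioc u v, |f τ - f x| ≤ C) →
      ∫ τ in Ioc u v, |f τ - f x| ≤ C * (v - u) := fun huv hC => by
    rw [← Real.volume_real_Ioc_of_le huv]
    have := norm_setIntegral_le_of_norm_le_const (measure_Ioc_lt_top (μ := volume))
      fun τ hτ => (Real.norm_eq_abs _).trans_le ((abs_abs _).trans_le (hC τ hτ))
    exact (le_abs_self _).trans this
  have hs : s ∈ Icc s t := ⟨le_rfl, hsx.trans hxt⟩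
  have hx : x ∈ Icc s t := ⟨hsx, hxt⟩
  have ht : t ∈ Icc s t := ⟨hsx.trans hxt, le_rfl⟩
  have hint := integrableOn_abs_sub_of_monotoneOn hf (f x)
  rw [← Ioc_union_Ioc_eq_Ioc hsx hxt, setIntegral_union (Ioc_disjoint_Ioc_of_le le_rfl)
    measurableSet_Ioc (hint.mono_set (Ioc_subset_Ioc_right hxt))
    (hint.mono_set (Ioc_subset_Ioc_left hsx))]
  refine add_le_add (hbound hsx fun τ hτ => ?_) (hbound hxt fun τ hτ => ?_)
  · have hτ' : τ ∈ Icc s t := ⟨hτ.1.le, hτ.2.trans hxt⟩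
    have := hf hs hτ' hτ.1.le
    have := hf hτ' hx hτ.2
    exact abs_sub_le_iff.2 ⟨by linarith, by linarith⟩
  · have hτ' : τ ∈ Icc s t := ⟨hsx.trans hτ.1.le, hτ.2⟩
    have := hf hx hτ' hτ.1.le
    have := hf hτ' ht hτ.2
    exact abs_sub_le_iff.2 ⟨by linarith, by linarith⟩

end MonotoneOn

lemma sum_restrict_Ioc_of_monotone {α : Type*} [MeasurableSpace α] [LinearOrder α]
    [TopologicalSpace α] [OrderClosedTopology α] [OpensMeasurableSpace α] (μ : Measure α)
    {f : ℕ → α} (hf : Monotone f) (n : ℕ) :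
    ∑ i ∈ Finset.range n, μ.restrict (Ioc (f i) (f (i + 1))) = μ.restrict (Ioc (f 0) (f n)) := by
  induction n with
  | zero => simp
  | succ n ih =>
    rw [Finset.sum_range_succ, ih, ← Measure.restrict_union (Ioc_disjoint_Ioc_of_le le_rfl)
      measurableSet_Ioc, Ioc_union_Ioc_eq_Ioc (hf n.zero_le) (hf n.le_succ)]

section Cells

variable {m : ℕ}

abbrev cell (m i : ℕ) : Set ℝ := Ioc (i / m) ((i + 1) / m)

noncomputable def cellMid (m : ℕ) (τ : ℝ) : ℝ := (2 * ⌈(m : ℝ) * τ⌉ - 1) / (2 * m)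

lemma measurable_cellMid : Measurable (cellMid m) := by
  unfold cellMid
  measurability

lemma cellMid_eq (hm : 0 < m) {i : ℕ} {τ : ℝ} (hτ : τ ∈ cell m i) :
    cellMid m τ = (2 * i + 1) / (2 * m) := by
  have hm' : (0 : ℝ) < m := Nat.cast_pos.2 hm
  have hceil : ⌈(m : ℝ) * τ⌉ = i + 1 := by
    rw [Int.ceil_eq_iff]
    push_cast
    constructor
    · rw [add_sub_cancel_right, ← div_lt_iff₀' hm']; exact hτ.1
    · rw [← le_div_iff₀' hm']; exact hτ.2
  rw [cellMid, hceil]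
  push_cast
  ring

lemma volume_cell (hm : 0 < m) (i : ℕ) : volume (cell m i) = (m : ℝ≥0∞)⁻¹ := by
  have hm' : (0 : ℝ) < m := Nat.cast_pos.2 hm
  rw [Real.volume_Ioc, ← sub_div, add_sub_cancel_left, one_div, ENNReal.ofReal_inv_of_pos hm',
    ENNReal.ofReal_natCast]

lemma volume_restrict_Ioc_zero_one_eq_sum (hm : 0 < m) :
    volume.restrict (Ioc (0 : ℝ) 1) = ∑ i ∈ Finset.range m, volume.restrict (cell m i) := by
  have hm' : (m : ℝ) ≠ 0 := Nat.cast_ne_zero.2 hm.ne'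
  have hmono : Monotone fun i : ℕ => (i : ℝ) / m := fun i j hij => by dsimp only; gcongr
  simpa [hm'] using (sum_restrict_Ioc_of_monotone volume hmono m).symm

lemma map_comp_cellMid (hm : 0 < m) {f : ℝ → ℝ} (hf : Measurable f) :
    (volume.restrict (Ioc (0 : ℝ) 1)).map (fun τ => f (cellMid m τ)) =
      (m : ℝ≥0∞)⁻¹ • ∑ i ∈ Finset.range m, Measure.dirac (f ((2 * i + 1) / (2 * m))) := by
  rw [volume_restrict_Ioc_zero_one_eq_sum hm, Measure.map_finset_sum
    (f := fun τ => f (cellMid m τ)) (hf.comp measurable_cellMid).aemeasurable, Finset.smul_sum]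
  refine Finset.sum_congr rfl fun i _ => ?_
  have hconst : (fun τ => f (cellMid m τ)) =ᵐ[volume.restrict (cell m i)]
      fun _ => f ((2 * i + 1) / (2 * m)) :=
    ae_restrict_of_forall_mem measurableSet_Ioc fun τ hτ => congrArg f (cellMid_eq hm hτ)
  rw [Measure.map_congr hconst, Measure.map_const, Measure.restrict_apply_univ, volume_cell hm]

lemma integral_abs_sub_comp_cellMid_le (hm : 0 < m) {f : ℝ → ℝ} (hf : Monotone f) :
    ∫ τ in Ioc (0 : ℝ) 1, |f τ - f (cellMid m τ)| ≤ (f 1 - f 0) / (2 * m) := by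
  have hm' : (m : ℝ) ≠ 0 := Nat.cast_ne_zero.2 hm.ne'
  have hcell (i : ℕ) : EqOn (fun τ => |f τ - f (cellMid m τ)|)
      (fun τ => |f τ - f ((2 * i + 1) / (2 * m))|) (cell m i) :=
    fun τ hτ => by simp only [cellMid_eq hm hτ]
  rw [volume_restrict_Ioc_zero_one_eq_sum hm, integral_finsetSum_measure fun i _ =>
    (integrableOn_abs_sub_of_monotoneOn (hf.monotoneOn _) _).congr_fun (hcell i).symm
      measurableSet_Ioc]
  calc ∑ i ∈ Finset.range m, ∫ τ in cell m i, |f τ - f (cellMid m τ)|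
      = ∑ i ∈ Finset.range m, ∫ τ in cell m i, |f τ - f ((2 * i + 1) / (2 * m))| :=
        Finset.sum_congr rfl fun i _ => setIntegral_congr_fun measurableSet_Ioc (hcell i)
    _ ≤ ∑ i ∈ Finset.range m, (f ((i + 1) / m) - f (i / m)) / (2 * m) := by
        refine Finset.sum_le_sum fun i _ => ?_
        have hleft : (2 * i + 1) / (2 * m) - i / m = (1 / (2 * m) : ℝ) := by field_simp; ring
        have hright : (i + 1) / m - (2 * i + 1) / (2 * m) = (1 / (2 * m) : ℝ) := by
          field_simp; ring
        refine (setIntegral_abs_sub_le_of_monotoneOn (hf.monotoneOn _) (sub_nonneg.1 ?_)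
          (sub_nonneg.1 ?_)).trans_eq ?_
        · rw [hleft]; positivity
        · rw [hright]; positivity
        · rw [hleft, hright]; ring
    _ = (f 1 - f 0) / (2 * m) := by
        have htelescope := Finset.sum_range_sub (fun i : ℕ => f (i / m)) m
        push_cast at htelescope
        rw [← Finset.sum_div, htelescope, zero_div, div_self hm']

end Cells

theorem W1_quantile_projection_bound_general (μ : Measure ℝ) [IsProbabilityMeasure μ]
    (a b : ℝ) (hsupp : μ (Set.Icc a b) = 1)
    (m : ℕ) (hm : 1 ≤ m)
    (ν : Measure ℝ)
    (hν : ν = (m : ENNReal)⁻¹ •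
      ∑ i ∈ Finset.range m, Measure.dirac (quantile μ ((2 * (i : ℝ) + 1) / (2 * m)))) :
    W1 μ ν ≤ (b - a) / (2 * m) := by
  have hQ : Monotone (quantileExtend μ a) := monotone_quantileExtend hsupp
  let ρ := volume.restrict (Ioc (0 : ℝ) 1)
  have : IsProbabilityMeasure ρ := ⟨by simp [ρ]⟩
  have hmid : ∀ i ∈ Finset.range m, (2 * (i : ℝ) + 1) / (2 * m) ∈ Ioc 0 1 := fun i hi => by
    have : (i : ℝ) + 1 ≤ m := by exact_mod_cast Finset.mem_range.1 hi
    exact ⟨by positivity, (div_le_one (by positivity)).2 (by linarith)⟩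
  have hν' : ν = ρ.map fun τ => quantileExtend μ a (cellMid m τ) := by
    rw [map_comp_cellMid hm hQ.measurable, hν]
    congr 1
    exact Finset.sum_congr rfl fun i hi => by rw [quantileExtend_of_mem_Ioc (hmid i hi)]
  calc W1 μ ν
      = W1 (ρ.map (quantileExtend μ a)) (ρ.map fun τ => quantileExtend μ a (cellMid m τ)) := by
        rw [map_quantileExtend hsupp, hν']
    _ ≤ ∫ τ in Ioc 0 1, |quantileExtend μ a τ - quantileExtend μ a (cellMid m τ)| :=
        W1_map_le_integral ρ hQ.measurable (hQ.measurable.comp measurable_cellMid)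
    _ ≤ (quantileExtend μ a 1 - quantileExtend μ a 0) / (2 * m) :=
        integral_abs_sub_comp_cellMid_le hm hQ
    _ ≤ (b - a) / (2 * m) := by
        rw [quantileExtend_zero]
        gcongr
        exact quantileExtend_one_le hsupp

/-- For `μ` supported on `[a,b]`, the discrete distribution `ν` placing mass `1/m` at each of
the quantiles at levels `(2i−1)/(2m)` satisfies `W₁(μ, ν) ≤ (b − a)/(2m)`. -/
theorem W1_quantile_projection_bound (μ : Measure ℝ) [IsProbabilityMeasure μ]
    (a b : ℝ) (hab : a ≤ b) (hsupp : μ (Set.Icc a b) = 1)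
    (m : ℕ) (hm : 1 ≤ m)
    (ν : Measure ℝ)
    (hν : ν = (m : ENNReal)⁻¹ •
      ∑ i ∈ Finset.range m, Measure.dirac (quantile μ ((2 * (i : ℝ) + 1) / (2 * m)))) :
    W1 μ ν ≤ (b - a) / (2 * m) :=
  W1_quantile_projection_bound_general μ a b hsupp m hm ν hν
end

section
/- Let F⁻¹ : (0,1) → ℝ be nondecreasing and integrable, with mean μ̄ = ∫₀¹ F⁻¹(τ)dτ. Suppose F⁻¹(τ) ∈ [a, b] for all τ ∈ [1/(2m), 1 − 1/(2m)]. Then |μ̄ − (1/m)Σ_{i=1}^m F⁻¹((2i−1)/(2m))| ≤ (b−a)/(2m) + ∫_{1−1/(2m)}^1 (F⁻¹(τ) − b)_+ dτ + ∫_0^{1/(2m)} (a − F⁻¹(τ))_+ dτ. -/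
/-! Clip `F⁻¹` to `G = max a (min F⁻¹ b)`. Then `G` is monotone with values in `[a, b]` and agrees
with `F⁻¹` at the midpoints, which lie in the central region. Between consecutive midpoints,
monotonicity traps `G` between its values there; on the two boundary half-cells it lies between
`a` and `G` at the first midpoint, resp. `G` at the last midpoint and `b`. Summing, the quadrature
error of `G` telescopes to at most `(b − a)/(2m)`. Finally `F⁻¹ − G = (F⁻¹ − b)₊ − (a − F⁻¹)₊`, and
by monotonicity the first term vanishes below `1 − 1/(2m)` and the second above `1/(2m)`. -/

open MeasureTheory Set

namespace intervalIntegral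

variable {f : ℝ → ℝ} {x y C : ℝ}

theorem integral_le_sub_mul_of_forall_le (hxy : x ≤ y) (hfi : IntegrableOn f (Ioo x y))
    (h : ∀ t ∈ Ioo x y, f t ≤ C) : ∫ t in x..y, f t ≤ (y - x) * C := by
  simpa [mul_comm] using integral_mono_on_of_le_Ioo hxy
    ((intervalIntegrable_iff_integrableOn_Ioo_of_le hxy).2 hfi) intervalIntegrable_const h

theorem sub_mul_le_integral_of_forall_le (hxy : x ≤ y) (hfi : IntegrableOn f (Ioo x y))
    (h : ∀ t ∈ Ioo x y, C ≤ f t) : (y - x) * C ≤ ∫ t in x..y, f t := by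
  simpa [mul_comm] using integral_mono_on_of_le_Ioo hxy intervalIntegrable_const
    ((intervalIntegrable_iff_integrableOn_Ioo_of_le hxy).2 hfi) h

end intervalIntegral

theorem setIntegral_Ioo_eq_integral_add_integral_add_integral {f : ℝ → ℝ} {x u v y : ℝ}
    (hxu : x ≤ u) (huv : u ≤ v) (hvy : v ≤ y) (hfi : IntegrableOn f (Ioo x y)) :
    ∫ t in Ioo x y, f t = (∫ t in x..u, f t) + (∫ t in u..v, f t) + ∫ t in v..y, f t := by
  have hii : ∀ p q, x ≤ p → p ≤ q → q ≤ y → IntervalIntegrable f volume p q :=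
    fun p q hp hpq hq => (intervalIntegrable_iff_integrableOn_Ioo_of_le hpq).2
      (hfi.mono_set (Ioo_subset_Ioo hp hq))
  rw [← integral_Ioc_eq_integral_Ioo, ← intervalIntegral.integral_of_le (by linarith),
    intervalIntegral.integral_add_adjacent_intervals (hii x u le_rfl hxu (by linarith))
      (hii u v hxu huv hvy),
    intervalIntegral.integral_add_adjacent_intervals (hii x v le_rfl (by linarith) hvy)
      (hii v y (by linarith) hvy le_rfl)]

section MonotoneRiemannSums

variable {f : ℝ → ℝ} {x y x₀ δ : ℝ} {n : ℕ}

theorem MonotoneOn.integrableOn_Ioo (hf : MonotoneOn f (Icc x y)) : IntegrableOn f (Ioo x y) :=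
  (hf.integrableOn_isCompact isCompact_Icc).mono_set Ioo_subset_Icc_self

theorem MonotoneOn.sub_mul_le_intervalIntegral (hxy : x ≤ y) (hf : MonotoneOn f (Icc x y)) :
    (y - x) * f x ≤ ∫ t in x..y, f t :=
  intervalIntegral.sub_mul_le_integral_of_forall_le hxy hf.integrableOn_Ioo
    fun _ ht => hf (left_mem_Icc.2 hxy) (Ioo_subset_Icc_self ht) ht.1.le

theorem MonotoneOn.intervalIntegral_le_sub_mul (hxy : x ≤ y) (hf : MonotoneOn f (Icc x y)) :
    ∫ t in x..y, f t ≤ (y - x) * f y :=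
  intervalIntegral.integral_le_sub_mul_of_forall_le hxy hf.integrableOn_Ioo
    fun _ ht => hf (Ioo_subset_Icc_self ht) (right_mem_Icc.2 hxy) ht.2.le

theorem Icc_add_mul_subset_Icc_add_mul {i : ℕ} (hi : i < n) (hδ : 0 ≤ δ) :
    Icc (x₀ + i * δ) (x₀ + (i + 1) * δ) ⊆ Icc x₀ (x₀ + n * δ) := by
  have : (i : ℝ) + 1 ≤ n := by exact_mod_cast hi
  exact Icc_subset_Icc (by nlinarith [(i.cast_nonneg : (0 : ℝ) ≤ i)]) (by nlinarith)

theorem MonotoneOn.intervalIntegral_eq_sum (hδ : 0 ≤ δ)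
    (hf : MonotoneOn f (Icc x₀ (x₀ + n * δ))) :
    ∫ t in x₀..x₀ + n * δ, f t =
      ∑ i ∈ Finset.range n, ∫ t in x₀ + i * δ..x₀ + (i + 1) * δ, f t := by
  have := intervalIntegral.sum_integral_adjacent_intervals (μ := volume) (f := f)
    (a := fun i : ℕ => x₀ + i * δ) fun i hi => by
      refine (hf.mono ?_).intervalIntegrable
      rw [uIcc_of_le (by push_cast; nlinarith)]
      exact_mod_cast Icc_add_mul_subset_Icc_add_mul hi hδ
  push_cast at this
  simpa using this.symm

theorem MonotoneOn.mul_sum_le_intervalIntegral (hδ : 0 ≤ δ)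
    (hf : MonotoneOn f (Icc x₀ (x₀ + n * δ))) :
    δ * ∑ i ∈ Finset.range n, f (x₀ + i * δ) ≤ ∫ t in x₀..x₀ + n * δ, f t := by
  rw [hf.intervalIntegral_eq_sum hδ, Finset.mul_sum]
  refine Finset.sum_le_sum fun i hi => ?_
  have hcell := (hf.mono (Icc_add_mul_subset_Icc_add_mul (Finset.mem_range.1 hi) hδ)
    ).sub_mul_le_intervalIntegral (by nlinarith)
  rwa [show x₀ + (i + 1) * δ - (x₀ + i * δ) = δ by ring] at hcell

theorem MonotoneOn.intervalIntegral_le_mul_sum (hδ : 0 ≤ δ)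
    (hf : MonotoneOn f (Icc x₀ (x₀ + n * δ))) :
    ∫ t in x₀..x₀ + n * δ, f t ≤
      δ * ∑ i ∈ Finset.range n, f (x₀ + (i + 1) * δ) := by
  rw [hf.intervalIntegral_eq_sum hδ, Finset.mul_sum]
  refine Finset.sum_le_sum fun i hi => ?_
  have hcell := (hf.mono (Icc_add_mul_subset_Icc_add_mul (Finset.mem_range.1 hi) hδ)
    ).intervalIntegral_le_sub_mul (by nlinarith)
  rwa [show x₀ + (i + 1) * δ - (x₀ + i * δ) = δ by ring] at hcell

end MonotoneRiemannSums

section Midpoint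

-- The nodes `h + i * (2 * h)`, `i ≤ n`, cut `(0, 1)` into two boundary pieces of length `h` and
-- `n` cells of length `2 * h` between them.

variable {f : ℝ → ℝ} {a b h : ℝ} {n : ℕ}

theorem MonotoneOn.setIntegral_le_midpoint_sum_add (hh : 0 < h) (hnh : (2 * n + 2) * h = 1)
    (hf : MonotoneOn f (Ioo 0 1)) (hfi : IntegrableOn f (Ioo 0 1))
    (hfb : ∀ t ∈ Ioo (0 : ℝ) 1, f t ≤ b) :
    ∫ t in Ioo 0 1, f t ≤
      2 * h * ∑ i ∈ Finset.range (n + 1), f (h + i * (2 * h)) + h * (b - f h) := by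
  have hn : 0 ≤ (n : ℝ) * (2 * h) := by positivity
  have hend : h + n * (2 * h) = 1 - h := by linarith
  have hcentral : Icc h (h + n * (2 * h)) ⊆ Ioo 0 1 := Icc_subset_Ioo (by linarith) (by linarith)
  have hleft := intervalIntegral.integral_le_sub_mul_of_forall_le hh.le
    (hfi.mono_set (Ioo_subset_Ioo_right (by linarith)))
    fun t ht => hf ⟨ht.1, by linarith [ht.2]⟩ (hcentral (left_mem_Icc.2 (by linarith))) ht.2.le
  have hmid := (hf.mono hcentral).intervalIntegral_le_mul_sum (by linarith)
  have hright := intervalIntegral.integral_le_sub_mul_of_forall_le (x := h + n * (2 * h))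
    (by linarith)
    (hfi.mono_set (Ioo_subset_Ioo_left (by linarith)))
    fun t ht => hfb t ⟨by linarith [ht.1], ht.2⟩
  rw [setIntegral_Ioo_eq_integral_add_integral_add_integral (v := h + n * (2 * h)) hh.le
      (by linarith) (by linarith) hfi,
    Finset.sum_range_succ']
  push_cast at hmid ⊢
  rw [hend] at hmid hright ⊢
  simp only [zero_mul, add_zero]
  linarith

theorem MonotoneOn.midpoint_sum_sub_le_setIntegral (hh : 0 < h) (hnh : (2 * n + 2) * h = 1)
    (hf : MonotoneOn f (Ioo 0 1)) (hfi : IntegrableOn f (Ioo 0 1))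
    (hfa : ∀ t ∈ Ioo (0 : ℝ) 1, a ≤ f t) :
    2 * h * ∑ i ∈ Finset.range (n + 1), f (h + i * (2 * h)) - h * (f (1 - h) - a) ≤
      ∫ t in Ioo 0 1, f t := by
  have hn : 0 ≤ (n : ℝ) * (2 * h) := by positivity
  have hend : h + n * (2 * h) = 1 - h := by linarith
  have hcentral : Icc h (h + n * (2 * h)) ⊆ Ioo 0 1 := Icc_subset_Ioo (by linarith) (by linarith)
  have hleft := intervalIntegral.sub_mul_le_integral_of_forall_le hh.le
    (hfi.mono_set (Ioo_subset_Ioo_right (by linarith)))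
    fun t ht => hfa t ⟨ht.1, by linarith [ht.2]⟩
  have hmid := (hf.mono hcentral).mul_sum_le_intervalIntegral (by linarith)
  have hright := intervalIntegral.sub_mul_le_integral_of_forall_le (x := h + n * (2 * h))
    (by linarith)
    (hfi.mono_set (Ioo_subset_Ioo_left (by linarith)))
    fun t ht => hf (hcentral (right_mem_Icc.2 (by linarith))) ⟨by linarith [ht.1], ht.2⟩ ht.1.le
  rw [setIntegral_Ioo_eq_integral_add_integral_add_integral (v := h + n * (2 * h)) hh.le
      (by linarith) (by linarith) hfi,
    Finset.sum_range_succ]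
  rw [hend] at hmid hright ⊢
  linarith

end Midpoint

theorem two_mul_add_one_div_two_mul_mem_Icc {i m : ℕ} (hi : i < m) :
    (2 * (i : ℝ) + 1) / (2 * m) ∈ Icc (1 / (2 * (m : ℝ))) (1 - 1 / (2 * m)) := by
  have hm : (0 : ℝ) < m := by exact_mod_cast (Nat.zero_le i).trans_lt hi
  have hi' : (i : ℝ) + 1 ≤ m := by exact_mod_cast hi
  constructor
  · gcongr; linarith [(i.cast_nonneg : (0 : ℝ) ≤ i)]
  · rw [div_le_iff₀ (by positivity)]
    field_simp
    linarith

theorem MonotoneOn.abs_setIntegral_sub_midpoint_sum_le {f : ℝ → ℝ} {a b : ℝ} {m : ℕ}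
    (hm : 1 ≤ m) (hf : MonotoneOn f (Ioo 0 1)) (hfi : IntegrableOn f (Ioo 0 1))
    (hfab : ∀ t ∈ Ioo (0 : ℝ) 1, f t ∈ Icc a b) :
    |(∫ t in Ioo 0 1, f t) -
        (1 / m) * ∑ i ∈ Finset.range m, f ((2 * (i : ℝ) + 1) / (2 * m))| ≤ (b - a) / (2 * m) := by
  obtain ⟨n, rfl⟩ : ∃ n, m = n + 1 := ⟨m - 1, by omega⟩
  set h : ℝ := 1 / (2 * ((n + 1 : ℕ) : ℝ)) with hh
  have hh0 : 0 < h := by positivity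
  have hnh : (2 * n + 2) * h = 1 := by rw [hh]; push_cast; field_simp
  have hsum : (1 / ((n + 1 : ℕ) : ℝ)) * ∑ i ∈ Finset.range (n + 1),
      f ((2 * (i : ℝ) + 1) / (2 * ((n + 1 : ℕ) : ℝ))) =
        2 * h * ∑ i ∈ Finset.range (n + 1), f (h + i * (2 * h)) := by
    rw [hh, Finset.mul_sum, Finset.mul_sum]
    refine Finset.sum_congr rfl fun i _ => ?_
    congr 1
    · ring
    · congr 1; field_simp; ring
  have hn : 0 ≤ (n : ℝ) * (2 * h) := by positivity
  have ha := (hfab h ⟨hh0, by linarith⟩).1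
  have hb := (hfab (1 - h) ⟨by linarith, by linarith⟩).2
  have hupper := hf.setIntegral_le_midpoint_sum_add hh0 hnh hfi fun t ht => (hfab t ht).2
  have hlower := hf.midpoint_sum_sub_le_setIntegral hh0 hnh hfi fun t ht => (hfab t ht).1
  rw [hsum, abs_le, show (b - a) / (2 * ((n + 1 : ℕ) : ℝ)) = h * (b - a) by rw [hh]; ring]
  constructor <;> nlinarith

theorem sub_max_min_eq {x a b : ℝ} (hab : a ≤ b) :
    x - max a (min x b) = max (x - b) 0 - max (a - x) 0 := by
  rcases le_total x a with hxa | hax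
  · simp [hxa, hxa.trans hab]
  · rcases le_total x b with hxb | hbx
    · simp [hax, hxb]
    · simp [hbx, hab, hab.trans hbx]

section Clamp

variable {α : Type*} [MeasurableSpace α] {μ : Measure α} [IsFiniteMeasure μ] {F : α → ℝ}
  {a b : ℝ}

theorem MeasureTheory.Integrable.max_min_const (hF : Integrable F μ) :
    Integrable (fun x => max a (min (F x) b)) μ :=
  (integrable_const a).sup (hF.inf (integrable_const b))

theorem integral_sub_integral_max_min (hab : a ≤ b) (hF : Integrable F μ) :
    ∫ x, F x ∂μ - ∫ x, max a (min (F x) b) ∂μ =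
      ∫ x, max (F x - b) 0 ∂μ - ∫ x, max (a - F x) 0 ∂μ := by
  rw [← integral_sub hF hF.max_min_const,
    ← integral_sub (f := fun x => max (F x - b) 0) (g := fun x => max (a - F x) 0)
      (hF.sub (integrable_const b)).pos_part ((integrable_const a).sub hF).pos_part]
  simp_rw [sub_max_min_eq hab]

end Clamp

section Tails

variable {F : ℝ → ℝ} {u v c : ℝ}

theorem MonotoneOn.setIntegral_Ioo_max_sub_const_eq (hF : MonotoneOn F (Ioo u v))
    (hc : c ∈ Ioo u v) {b : ℝ} (hFc : F c ≤ b) :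
    ∫ τ in Ioo u v, max (F τ - b) 0 = ∫ τ in Ioo c v, max (F τ - b) 0 :=
  setIntegral_eq_of_subset_of_forall_sdiff_eq_zero measurableSet_Ioo (Ioo_subset_Ioo_left hc.1.le)
    fun _ ⟨hτ, hτc⟩ => max_eq_right <| sub_nonpos.2 <|
      (hF hτ hc (not_lt.1 fun h => hτc ⟨h, hτ.2⟩)).trans hFc

theorem MonotoneOn.setIntegral_Ioo_max_const_sub_eq (hF : MonotoneOn F (Ioo u v))
    (hc : c ∈ Ioo u v) {a : ℝ} (hFc : a ≤ F c) :
    ∫ τ in Ioo u v, max (a - F τ) 0 = ∫ τ in Ioo u c, max (a - F τ) 0 :=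
  setIntegral_eq_of_subset_of_forall_sdiff_eq_zero measurableSet_Ioo (Ioo_subset_Ioo_right hc.2.le)
    fun _ ⟨hτ, hτc⟩ => max_eq_right <| sub_nonpos.2 <|
      hFc.trans (hF hc hτ (not_lt.1 fun h => hτc ⟨hτ.1, h⟩))

end Tails

/-- Midpoint-quadrature mean bound for a nondecreasing integrable quantile function `F⁻¹` on
`(0,1)` which takes values in `[a,b]` on the central region `[1/(2m), 1 − 1/(2m)]`:
`|μ̄ − (1/m)Σ_{i=1}^m F⁻¹((2i−1)/(2m))| ≤ (b−a)/(2m) + tail excess integrals`. -/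
theorem midpoint_quadrature_unbounded_bound
    (Finv : ℝ → ℝ) (hmono : MonotoneOn Finv (Set.Ioo (0 : ℝ) 1))
    (hint : IntegrableOn Finv (Set.Ioo (0 : ℝ) 1))
    (a b : ℝ) (hab : a ≤ b) (m : ℕ) (hm : 1 ≤ m)
    (hbound : ∀ τ ∈ Set.Icc (1 / (2 * (m : ℝ))) (1 - 1 / (2 * m)), Finv τ ∈ Set.Icc a b) :
    |(∫ τ in Set.Ioo (0 : ℝ) 1, Finv τ) -
        (1 / m) * ∑ i ∈ Finset.range m, Finv ((2 * (i : ℝ) + 1) / (2 * m))|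
      ≤ (b - a) / (2 * m)
        + (∫ τ in Set.Ioo (1 - 1 / (2 * (m : ℝ))) 1, max (Finv τ - b) 0)
        + ∫ τ in Set.Ioo (0 : ℝ) (1 / (2 * m)), max (a - Finv τ) 0 := by
  have hclip_mid : ∀ i ∈ Finset.range m, max a (min (Finv ((2 * (i : ℝ) + 1) / (2 * m))) b) =
      Finv ((2 * (i : ℝ) + 1) / (2 * m)) := fun i hi => by
    obtain ⟨hai, hib⟩ := hbound _ (two_mul_add_one_div_two_mul_mem_Icc (Finset.mem_range.1 hi))
    simp [hai, hib]
  have hquad := ((monotone_const.max (monotone_id.min monotone_const)).comp_monotoneOn hmono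
    ).abs_setIntegral_sub_midpoint_sum_le hm hint.max_min_const
    fun t _ => ⟨le_max_left _ _, max_le hab (min_le_right _ _)⟩
  simp only [Function.comp_apply, id] at hquad
  rw [Finset.sum_congr rfl hclip_mid] at hquad
  have hh : 1 / (2 * (m : ℝ)) ∈ Set.Icc (1 / (2 * (m : ℝ))) (1 - 1 / (2 * m)) := by
    simpa using two_mul_add_one_div_two_mul_mem_Icc (i := 0) hm
  have hh0 : 0 < 1 / (2 * (m : ℝ)) := by positivity
  have hclip := integral_sub_integral_max_min hab hint
  rw [hmono.setIntegral_Ioo_max_sub_const_eq ⟨by linarith [hh.2], by linarith⟩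
      (hbound _ ⟨hh.2, le_rfl⟩).2,
    hmono.setIntegral_Ioo_max_const_sub_eq ⟨hh0, by linarith [hh.2]⟩ (hbound _ hh).1] at hclip
  have hright_nonneg : 0 ≤ ∫ τ in Set.Ioo (1 - 1 / (2 * (m : ℝ))) 1, max (Finv τ - b) 0 :=
    setIntegral_nonneg measurableSet_Ioo fun _ _ => le_max_right _ _
  have hleft_nonneg : 0 ≤ ∫ τ in Set.Ioo (0 : ℝ) (1 / (2 * m)), max (a - Finv τ) 0 :=
    setIntegral_nonneg measurableSet_Ioo fun _ _ => le_max_right _ _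
  have htri := abs_sub_le (∫ τ in Set.Ioo (0 : ℝ) 1, Finv τ)
    (∫ τ in Set.Ioo (0 : ℝ) 1, max a (min (Finv τ) b))
    ((1 / m) * ∑ i ∈ Finset.range m, Finv ((2 * (i : ℝ) + 1) / (2 * m)))
  rw [hclip] at htri
  linarith [abs_sub (∫ τ in Set.Ioo (1 - 1 / (2 * (m : ℝ))) 1, max (Finv τ - b) 0)
    (∫ τ in Set.Ioo (0 : ℝ) (1 / (2 * m)), max (a - Finv τ) 0), abs_of_nonneg hright_nonneg,
    abs_of_nonneg hleft_nonneg]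
end
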